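/- Suppose the norm ‖·‖ on ℝ^k satisfies Assumption 1, V ⊊ {1,…,k} is a proper subset, γ ∈ (0,1], C > 0, and b > 0. Let A_V := {x ∈ ℝ^k : x_j = 0 for all j ∉ V and x_j ≥ 0 for all j ∈ V}, and let x₁,…,x_n ∈ ℝ^k be design points none of which lies in A_V. Define f₁*(x) := min{ C‖(x)_{V+}‖^γ, b } and f₂*(x) := b for x ∈ A_V and f₂*(x) := min{ C‖(x)_{V+}‖^γ, b } for x ∉ A_V. Then f₁* ∈ Λ₊,V(γ,C), f₂* ∈ Λ₊,V(0,∞), f₂*(0) − f₁*(0) = b, and f₂*(x_i) = f₁*(x_i) for every i = 1,…,n; consequently the inverse ordered modulus satisfies ω⁻¹(b, Λ₊,V(γ,C), Λ₊,V(0,∞)) = 0. -/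

import Mathlib

/-!
Since `y ↦ (y)_{V+}` is coordinatewise `1`-Lipschitz and monotone in the `V`-coordinates, and
`t ↦ t ^ γ` is `γ`-Hölder on `[0, ∞)` for `γ ≤ 1`, the truncation `f₁*` lies in `Λ₊,V(γ,C)`.
The set `A_V` is upward closed for the order used in `Λ₊,V`, so raising `f₁* ≤ b` to `b` on `A_V`
keeps `f₂*` monotone. As `0 ∈ A_V` and `f₁*(0) = 0`, the pair has gap `b` at `0`, while it agrees
at every design point outside `A_V`; hence `0` is attained in the infimum defining `ω⁻¹`.
-/

open MeasureTheory Filter Finset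
open scoped Classical

/-- Positive part of a vector relative to coordinate set `V`. -/
def vplus {k : ℕ} (V : Finset (Fin k)) (z : Fin k → ℝ) : Fin k → ℝ :=
  fun j => if j ∈ V then max (z j) 0 else z j

/-- Negative part of a vector relative to coordinate set `V`. -/
def vminus {k : ℕ} (V : Finset (Fin k)) (z : Fin k → ℝ) : Fin k → ℝ :=
  vplus V (-z)

/-- A norm on `ℝ^k` satisfying Assumption 1 (monotone in the magnitude of each coordinate). -/
structure MonNorm (k : ℕ) where
  N : (Fin k → ℝ) → ℝ
  add_le : ∀ x y, N (x + y) ≤ N x + N y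
  smul_eq : ∀ (a : ℝ) (x), N (a • x) = |a| * N x
  eq_zero_iff : ∀ x, N x = 0 ↔ x = 0
  mono : ∀ z w : Fin k → ℝ, (∀ j, |z j| ≤ |w j|) → N z ≤ N w

/-- Hölder continuity with exponent `γ` and constant `C` w.r.t. the norm `N`. -/
def HolderW {k : ℕ} (N : (Fin k → ℝ) → ℝ) (γ C : ℝ) (f : (Fin k → ℝ) → ℝ) : Prop :=
  ∀ x z : Fin k → ℝ, |f x - f z| ≤ C * N (x - z) ^ γ

/-- Coordinatewise monotonicity w.r.t. the coordinates in `V`. -/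
def MonoV {k : ℕ} (V : Finset (Fin k)) (f : (Fin k → ℝ) → ℝ) : Prop :=
  ∀ x z : Fin k → ℝ, (∀ j ∈ V, z j ≤ x j) → (∀ j ∉ V, x j = z j) → f z ≤ f x

/-- The monotone Hölder class `Λ₊,V(γ,C)`. -/
def Lam {k : ℕ} (V : Finset (Fin k)) (N : (Fin k → ℝ) → ℝ) (γ C : ℝ) :
    Set ((Fin k → ℝ) → ℝ) :=
  {f | HolderW N γ C f ∧ MonoV V f}

/-- The class `Λ₊,V(0,∞)` of functions that are merely coordinatewise nondecreasing
with respect to the coordinates in `V`. -/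
def MonoClass {k : ℕ} (V : Finset (Fin k)) : Set ((Fin k → ℝ) → ℝ) :=
  {f | MonoV V f}

/-- Inverse ordered modulus of continuity (with `σ ≡ 1`) for the functional `f ↦ f(0)`. -/
noncomputable def invMod {k : ℕ} (n : ℕ) (x : Fin n → (Fin k → ℝ)) (b : ℝ)
    (F G : Set ((Fin k → ℝ) → ℝ)) : ℝ :=
  sInf {r : ℝ | ∃ f ∈ F, ∃ g ∈ G, g 0 - f 0 = b ∧
    r = Real.sqrt (∑ i, (g (x i) - f (x i)) ^ 2)}

/-- The set `A_V = {x : x_j = 0 ∀ j ∉ V, x_j ≥ 0 ∀ j ∈ V}`. -/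
def Aset {k : ℕ} (V : Finset (Fin k)) : Set (Fin k → ℝ) :=
  {x | (∀ j ∉ V, x j = 0) ∧ ∀ j ∈ V, 0 ≤ x j}

namespace MonNorm

variable {k : ℕ} (Nm : MonNorm k)

lemma map_zero : Nm.N 0 = 0 := (Nm.eq_zero_iff 0).2 rfl

lemma map_neg (x : Fin k → ℝ) : Nm.N (-x) = Nm.N x := by
  simpa using Nm.smul_eq (-1) x

lemma nonneg (x : Fin k → ℝ) : 0 ≤ Nm.N x := by
  have h := Nm.add_le x (-x)
  rw [add_neg_cancel, map_zero, map_neg] at h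
  linarith

lemma abs_sub_le (x z : Fin k → ℝ) : |Nm.N x - Nm.N z| ≤ Nm.N (x - z) := by
  have hx := Nm.add_le (x - z) z
  have hz := Nm.add_le (z - x) x
  rw [sub_add_cancel] at hx
  rw [sub_add_cancel, ← neg_sub, map_neg] at hz
  exact abs_sub_le_iff.2 ⟨by linarith, by linarith⟩

end MonNorm

section VPlus

variable {k : ℕ} (V : Finset (Fin k))

lemma vplus_zero : vplus V (0 : Fin k → ℝ) = 0 := by
  funext j
  simp [vplus]

lemma abs_vplus_sub_vplus_le (y z : Fin k → ℝ) (j : Fin k) :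
    |vplus V y j - vplus V z j| ≤ |y j - z j| := by
  by_cases hj : j ∈ V
  · simpa [vplus, hj] using abs_max_sub_max_le_abs (y j) (z j) 0
  · simp [vplus, hj]

lemma abs_vplus_le_abs_vplus {x z : Fin k → ℝ} (hV : ∀ j ∈ V, z j ≤ x j)
    (hVc : ∀ j ∉ V, x j = z j) (j : Fin k) : |vplus V z j| ≤ |vplus V x j| := by
  by_cases hj : j ∈ V
  · simp only [vplus, hj, if_true, abs_of_nonneg (le_max_right _ (0 : ℝ))]
    exact max_le_max_right 0 (hV j hj)
  · simp [vplus, hj, hVc j hj]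

lemma MonNorm.abs_sub_vplus_le (Nm : MonNorm k) (y z : Fin k → ℝ) :
    |Nm.N (vplus V y) - Nm.N (vplus V z)| ≤ Nm.N (y - z) :=
  (Nm.abs_sub_le _ _).trans (Nm.mono _ _ (abs_vplus_sub_vplus_le V y z))

lemma MonNorm.monoV_vplus (Nm : MonNorm k) : MonoV V (fun y => Nm.N (vplus V y)) :=
  fun _ _ hV hVc => Nm.mono _ _ (abs_vplus_le_abs_vplus V hV hVc)

end VPlus

lemma abs_rpow_sub_rpow_le {a c γ : ℝ} (ha : 0 ≤ a) (hc : 0 ≤ c) (hγ0 : 0 ≤ γ) (hγ1 : γ ≤ 1) :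
    |a ^ γ - c ^ γ| ≤ |a - c| ^ γ := by
  wlog hac : c ≤ a generalizing a c
  · rw [abs_sub_comm, abs_sub_comm a]
    exact this hc ha (le_of_not_ge hac)
  have hsub : a ^ γ ≤ c ^ γ + (a - c) ^ γ := by
    simpa using Real.rpow_add_le_add_rpow hc (sub_nonneg.2 hac) hγ0 hγ1
  rw [abs_of_nonneg (sub_nonneg.2 (Real.rpow_le_rpow hc hac hγ0)),
    abs_of_nonneg (sub_nonneg.2 hac)]
  linarith

section Truncation

variable {k : ℕ} {γ C : ℝ} {φ : (Fin k → ℝ) → ℝ}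

lemma holderW_min_mul_rpow {N : (Fin k → ℝ) → ℝ} (hφ0 : ∀ y, 0 ≤ φ y)
    (hφ : ∀ y z, |φ y - φ z| ≤ N (y - z)) (hγ0 : 0 ≤ γ) (hγ1 : γ ≤ 1) (hC : 0 ≤ C) (b : ℝ) :
    HolderW N γ C (fun y => min (C * φ y ^ γ) b) := by
  intro y z
  calc |min (C * φ y ^ γ) b - min (C * φ z ^ γ) b|
      ≤ |C * φ y ^ γ - C * φ z ^ γ| := by
        simpa using abs_min_sub_min_le_max (C * φ y ^ γ) b (C * φ z ^ γ) b
    _ = C * |φ y ^ γ - φ z ^ γ| := by rw [← mul_sub, abs_mul, abs_of_nonneg hC]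
    _ ≤ C * |φ y - φ z| ^ γ := by gcongr; exact abs_rpow_sub_rpow_le (hφ0 y) (hφ0 z) hγ0 hγ1
    _ ≤ C * N (y - z) ^ γ := by gcongr; exact hφ y z

lemma MonoV.min_mul_rpow {V : Finset (Fin k)} (hφ : MonoV V φ) (hφ0 : ∀ y, 0 ≤ φ y)
    (hγ0 : 0 ≤ γ) (hC : 0 ≤ C) (b : ℝ) : MonoV V (fun y => min (C * φ y ^ γ) b) :=
  fun x z hV hVc =>
    min_le_min_right b (mul_le_mul_of_nonneg_left
      (Real.rpow_le_rpow (hφ0 z) (hφ x z hV hVc) hγ0) hC)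

end Truncation

section Aset

variable {k : ℕ} {V : Finset (Fin k)}

lemma zero_mem_Aset : (0 : Fin k → ℝ) ∈ Aset V :=
  ⟨fun _ _ => rfl, fun _ _ => le_rfl⟩

lemma mem_Aset_of_le {x z : Fin k → ℝ} (hz : z ∈ Aset V) (hV : ∀ j ∈ V, z j ≤ x j)
    (hVc : ∀ j ∉ V, x j = z j) : x ∈ Aset V :=
  ⟨fun j hj => (hVc j hj).trans (hz.1 j hj), fun j hj => (hz.2 j hj).trans (hV j hj)⟩

lemma MonoV.ite_Aset {f : (Fin k → ℝ) → ℝ} {b : ℝ} (hf : MonoV V f) (hfb : ∀ y, f y ≤ b) :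
    MonoV V (fun y => if y ∈ Aset V then b else f y) := by
  intro x z hV hVc
  by_cases hz : z ∈ Aset V
  · simp [hz, mem_Aset_of_le hz hV hVc]
  · by_cases hx : x ∈ Aset V
    · simpa [hz, hx] using hfb z
    · simpa [hz, hx] using hf x z hV hVc

end Aset

lemma invMod_eq_zero_of_eq_on_design {k n : ℕ} {x : Fin n → (Fin k → ℝ)} {b : ℝ}
    {F G : Set ((Fin k → ℝ) → ℝ)} {f g : (Fin k → ℝ) → ℝ} (hf : f ∈ F) (hg : g ∈ G)
    (h0 : g 0 - f 0 = b) (hx : ∀ i, g (x i) = f (x i)) : invMod n x b F G = 0 := by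
  refine IsLeast.csInf_eq ⟨⟨f, hf, g, hg, h0, by simp [hx]⟩, ?_⟩
  rintro r ⟨-, -, -, -, -, rfl⟩
  exact Real.sqrt_nonneg _

theorem stmt_18_general {k : ℕ} (V : Finset (Fin k))
    (Nm : MonNorm k) (γ C b : ℝ)
    (hγ0 : 0 < γ) (hγ1 : γ ≤ 1) (hC : 0 < C) (hb : 0 < b)
    (n : ℕ) (x : Fin n → (Fin k → ℝ)) (hx : ∀ i, x i ∉ Aset V) :
    (fun y => min (C * Nm.N (vplus V y) ^ γ) b) ∈ Lam V Nm.N γ C ∧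
    (fun y => if y ∈ Aset V then b else min (C * Nm.N (vplus V y) ^ γ) b) ∈
      MonoClass V ∧
    (if (0 : Fin k → ℝ) ∈ Aset V then b
      else min (C * Nm.N (vplus V (0 : Fin k → ℝ)) ^ γ) b) -
      min (C * Nm.N (vplus V (0 : Fin k → ℝ)) ^ γ) b = b ∧
    (∀ i, (if x i ∈ Aset V then b else min (C * Nm.N (vplus V (x i)) ^ γ) b)
      = min (C * Nm.N (vplus V (x i)) ^ γ) b) ∧
    invMod n x b (Lam V Nm.N γ C) (MonoClass V) = 0 := by
  have hf₁ : (fun y => min (C * Nm.N (vplus V y) ^ γ) b) ∈ Lam V Nm.N γ C :=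
    ⟨holderW_min_mul_rpow (fun _ => Nm.nonneg _) (Nm.abs_sub_vplus_le V) hγ0.le hγ1 hC.le b,
      (Nm.monoV_vplus V).min_mul_rpow (fun _ => Nm.nonneg _) hγ0.le hC.le b⟩
  have hf₂ : (fun y => if y ∈ Aset V then b else min (C * Nm.N (vplus V y) ^ γ) b) ∈
      MonoClass V :=
    hf₁.2.ite_Aset fun _ => min_le_right _ _
  have hgap : (if (0 : Fin k → ℝ) ∈ Aset V then b
      else min (C * Nm.N (vplus V (0 : Fin k → ℝ)) ^ γ) b) -
      min (C * Nm.N (vplus V (0 : Fin k → ℝ)) ^ γ) b = b := by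
    rw [if_pos zero_mem_Aset, vplus_zero, Nm.map_zero, Real.zero_rpow hγ0.ne', mul_zero,
      min_eq_left hb.le, sub_zero]
  have hagree : ∀ i, (if x i ∈ Aset V then b else min (C * Nm.N (vplus V (x i)) ^ γ) b)
      = min (C * Nm.N (vplus V (x i)) ^ γ) b :=
    fun i => if_neg (hx i)
  exact ⟨hf₁, hf₂, hgap, hagree, invMod_eq_zero_of_eq_on_design hf₁ hf₂ hgap hagree⟩

/-- when `V` is a proper subset of the coordinates and no design point
lies in `A_V`, the pair `(f₁*, f₂*)` is feasible for the inverse ordered modulus problem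
`ω⁻¹(b, Λ₊,V(γ,C), Λ₊,V(0,∞))`, agrees at every design point, and hence the inverse
ordered modulus is `0`. -/
theorem stmt_18 {k : ℕ} (V : Finset (Fin k)) (hV : V ≠ Finset.univ)
    (Nm : MonNorm k) (γ C b : ℝ)
    (hγ0 : 0 < γ) (hγ1 : γ ≤ 1) (hC : 0 < C) (hb : 0 < b)
    (n : ℕ) (x : Fin n → (Fin k → ℝ)) (hx : ∀ i, x i ∉ Aset V) :
    (fun y => min (C * Nm.N (vplus V y) ^ γ) b) ∈ Lam V Nm.N γ C ∧
    (fun y => if y ∈ Aset V then b else min (C * Nm.N (vplus V y) ^ γ) b) ∈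
      MonoClass V ∧
    (if (0 : Fin k → ℝ) ∈ Aset V then b
      else min (C * Nm.N (vplus V (0 : Fin k → ℝ)) ^ γ) b) -
      min (C * Nm.N (vplus V (0 : Fin k → ℝ)) ^ γ) b = b ∧
    (∀ i, (if x i ∈ Aset V then b else min (C * Nm.N (vplus V (x i)) ^ γ) b)
      = min (C * Nm.N (vplus V (x i)) ^ γ) b) ∧
    invMod n x b (Lam V Nm.N γ C) (MonoClass V) = 0 :=
  stmt_18_general V Nm γ C b hγ0 hγ1 hC hb n x hx
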